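/- If 𝒜 has enough projectives and 𝒫(𝒜) ⊆ 𝒞, then every 𝒞-quasi-isomorphism of complexes over 𝒜 is a quasi-isomorphism. -/

import Mathlib

open CategoryTheory Limits

universe v u

variable {A : Type u} [Category.{v} A] [Abelian A]

/-- A complex `X` is `𝒞`-acyclic if `Hom_𝒜(C, X)` is an acyclic complex of abelian
groups for every `C ∈ 𝒞`. -/
def CAcyclic (𝒞 : Set A) (X : CochainComplex A ℤ) : Prop :=
  ∀ C ∈ 𝒞, ∀ i : ℤ,
    (((preadditiveCoyoneda.obj (Opposite.op C)).mapHomologicalComplex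
      (ComplexShape.up ℤ)).obj X).ExactAt i

/-- A chain map `f` is a `𝒞`-quasi-isomorphism if `Hom_𝒜(C, f)` is a quasi-isomorphism
for every `C ∈ 𝒞`. -/
def CQuasiIso (𝒞 : Set A) {X Y : CochainComplex A ℤ} (f : X ⟶ Y) : Prop :=
  ∀ C ∈ 𝒞, QuasiIso (((preadditiveCoyoneda.obj (Opposite.op C)).mapHomologicalComplex
      (ComplexShape.up ℤ)).map f)

/-- A cochain complex is bounded above. -/
def BoundedAbove (X : CochainComplex A ℤ) : Prop :=
  ∃ n : ℤ, ∀ i : ℤ, n < i → IsZero (X.X i)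

/-!
For projective `P` the functor `Hom(P, -)` is exact, so it commutes with homology:
`Hom(P, Hⁱ f) ≅ Hⁱ(Hom(P, f))`, and the latter is an isomorphism since `P ∈ 𝒞`. A morphism `g`
with every `Hom(P, g)` bijective is an isomorphism: lifting a projective cover of the target
through `g` makes `g` epi, and injectivity on a projective cover of `ker g` makes `g` mono.
-/

noncomputable instance preservesHomology_preadditiveCoyoneda_obj_of_projective
    (P : A) [Projective P] : (preadditiveCoyoneda.obj (Opposite.op P)).PreservesHomology :=
  have : PreservesFiniteColimits (preadditiveCoyonedaObj P ⋙ forget₂ _ AddCommGrpCat.{v}) :=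
    comp_preservesFiniteColimits _ _
  inferInstanceAs ((preadditiveCoyonedaObj P ⋙ forget₂ _ AddCommGrpCat).PreservesHomology)

lemma isIso_of_bijective_comp_of_projective [EnoughProjectives A] {Z W : A} (g : Z ⟶ W)
    (h : ∀ (P : A) [Projective P], Function.Bijective fun u : P ⟶ Z => u ≫ g) :
    IsIso g := by
  have : Epi g := by
    obtain ⟨u, hu⟩ := (h (Projective.over W)).2 (Projective.π W)
    exact epi_of_epi_fac hu
  have : Mono g := by
    apply Abelian.mono_of_kernel_ι_eq_zero
    have hπ : Projective.π (kernel g) ≫ kernel.ι g = 0 :=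
      (h (Projective.over (kernel g))).1 (by simp)
    rwa [← cancel_epi (Projective.π (kernel g)), comp_zero]
  exact isIso_of_mono_of_epi g

lemma CategoryTheory.ShortComplex.quasiIso_of_quasiIso_map_preadditiveCoyoneda
    [EnoughProjectives A] {S₁ S₂ : ShortComplex A} (φ : S₁ ⟶ S₂)
    (h : ∀ (P : A) [Projective P],
      QuasiIso ((preadditiveCoyoneda.obj (Opposite.op P)).mapShortComplex.map φ)) :
    ShortComplex.QuasiIso φ := by
  let γ : LeftHomologyMapData φ S₁.leftHomologyData S₂.leftHomologyData := default
  rw [γ.quasiIso_iff]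
  refine isIso_of_bijective_comp_of_projective _ fun P _ => ?_
  have := (γ.quasiIso_map_iff (preadditiveCoyoneda.obj (Opposite.op P))).mp (h P)
  exact ConcreteCategory.bijective_of_isIso ((preadditiveCoyoneda.obj (Opposite.op P)).map γ.φH)

lemma HomologicalComplex.quasiIso_of_quasiIso_map_preadditiveCoyoneda [EnoughProjectives A]
    {ι : Type*} {c : ComplexShape ι} {K L : HomologicalComplex A c} (f : K ⟶ L)
    (h : ∀ (P : A) [Projective P],
      QuasiIso (((preadditiveCoyoneda.obj (Opposite.op P)).mapHomologicalComplex c).map f)) :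
    QuasiIso f :=
  quasiIso_iff f |>.mpr fun i => (quasiIsoAt_iff f i).mpr <|
    ShortComplex.quasiIso_of_quasiIso_map_preadditiveCoyoneda _ fun P _ =>
      (quasiIsoAt_iff _ i).mp ((h P).quasiIsoAt i)

theorem stmt4 (𝒞 : Set A) [EnoughProjectives A]
    (hP : ∀ P : A, Projective P → P ∈ 𝒞)
    {X Y : CochainComplex A ℤ} (f : X ⟶ Y) (hf : CQuasiIso 𝒞 f) :
    QuasiIso f :=
  HomologicalComplex.quasiIso_of_quasiIso_map_preadditiveCoyoneda f
    fun P _ => hf P (hP P ‹_›)
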